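/- arXiv:1907.09106 — 2 statements merged into one kernel-verified Lean document; each statement's English description precedes it below -/
import Mathlib

section
/- Let Σ' = Σ'_i × Σ'_{-i} ⊆ Σ with Σ'_{-i} nonempty and let σ ∈ Σ'_i. Then σ is not conditionally dominated on Σ' if and only if there exists an LPS μ⃗_σ on Σ'_{-i} whose support (the union of the supports of its measures) is all of Σ'_{-i}, such that for each information set I of player i, either Σ'_{σ,I,-i} = ∅ or σ is an almost-best response conditional on reaching I to μ⃗_σ | Σ'_{σ,I,-i}. -/
open scoped BigOperators

noncomputable section

/-- A probability distribution on a finite type, represented as a weight function. -/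
def IsDist {α : Type*} [Fintype α] (p : α → ℝ) : Prop :=
  (∀ a, 0 ≤ p a) ∧ ∑ a, p a = 1

/-- The probability of a set under a weight function. -/
def probOf {α : Type*} [Fintype α] (p : α → ℝ) (E : Set α) : ℝ :=
  ∑ a, E.indicator p a

/-- A lexicographic probability sequence on a finite type. -/
structure LPS (Ω : Type*) [Fintype Ω] where
  m : ℕ
  μ : Fin (m + 1) → Ω → ℝ
  dist : ∀ ℓ, IsDist (μ ℓ)

namespace LPS

variable {Ω : Type*} [Fintype Ω]

open Classical in
/-- `(μ⃗(V | E))₀`: the conditional probability of `V` given `E` under the first measure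
of the LPS that gives `E` positive probability (0 if there is none). -/
def condFirst (L : LPS Ω) (V E : Set Ω) : ℝ :=
  if h : ∃ ℓ : ℕ, ∃ hℓ : ℓ < L.m + 1, 0 < probOf (L.μ ⟨ℓ, hℓ⟩) E then
    probOf (L.μ ⟨Nat.find h, (Nat.find_spec h).choose⟩) (V ∩ E) /
      probOf (L.μ ⟨Nat.find h, (Nat.find_spec h).choose⟩) E
  else 0

/-- Expectation of `f` under the first measure of `μ⃗|E`. -/
def condExp (L : LPS Ω) (E : Set Ω) (f : Ω → ℝ) : ℝ :=
  ∑ a, L.condFirst {a} E * f a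

end LPS

/-- The experience of player `i` along a history: the sequence of information-set labels of
`i` visited together with the actions `i` took there. `experGo owner label i pre rest`
processes the history `pre ++ rest`, where `pre` has already been traversed. -/
def experGo {Act Lab ι : Type*} [DecidableEq ι] (owner : List Act → ι)
    (label : List Act → Lab) (i : ι) : List Act → List Act → List (Lab × Act)
  | _, [] => []
  | pre, a :: rest =>
      (if owner pre = i then [(label pre, a)] else []) ++
        experGo owner label i (pre ++ [a]) rest

/-- A finite extensive-form game with perfect recall for `n` players and no chance moves,
presented via its set of histories (sequences of actions from the root). `owner h` is the
player who moves at a nonterminal history `h`, `label h` is the information set containing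
`h`, and `payoff i h` is `i`'s utility at a terminal history `h`. -/
structure ExtGame (n : ℕ) where
  Act : Type
  Lab : Type
  actFin : Fintype Act
  actDeq : DecidableEq Act
  actNe : Nonempty Act
  labFin : Fintype Lab
  labDeq : DecidableEq Lab
  maxLen : ℕ
  H : Set (List Act)
  root_mem : [] ∈ H
  prefix_closed : ∀ (h : List Act) (a : Act), h ++ [a] ∈ H → h ∈ H
  len_bound : ∀ h ∈ H, h.length ≤ maxLen
  owner : List Act → Fin n
  label : List Act → Lab
  payoff : Fin n → List Act → ℝ
  payoff_mem : ∀ (i : Fin n) (h : List Act), h ∈ H → (∀ a, h ++ [a] ∉ H) →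
    payoff i h ∈ Set.Icc (0 : ℝ) 1
  same_owner : ∀ h h', h ∈ H → h' ∈ H → (∃ a, h ++ [a] ∈ H) → (∃ a, h' ++ [a] ∈ H) →
    label h = label h' → owner h = owner h'
  same_actions : ∀ h h', h ∈ H → h' ∈ H → (∃ a, h ++ [a] ∈ H) → (∃ a, h' ++ [a] ∈ H) →
    label h = label h' → ∀ a, (h ++ [a] ∈ H ↔ h' ++ [a] ∈ H)
  no_two_on_path : ∀ h h', h ∈ H → h' ∈ H → (∃ a, h ++ [a] ∈ H) → (∃ a, h' ++ [a] ∈ H) →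
    label h = label h' → h <+: h' → h = h'
  perfect_recall : ∀ h h', h ∈ H → h' ∈ H → (∃ a, h ++ [a] ∈ H) → (∃ a, h' ++ [a] ∈ H) →
    label h = label h' →
    experGo owner label (owner h) [] h = experGo owner label (owner h) [] h'

attribute [instance] ExtGame.actFin ExtGame.actDeq ExtGame.actNe ExtGame.labFin
  ExtGame.labDeq

namespace ExtGame

variable {n : ℕ}

/-- `h` is a decision node. -/
def Dec (G : ExtGame n) (h : List G.Act) : Prop := h ∈ G.H ∧ ∃ a, h ++ [a] ∈ G.H

/-- `h` is a decision node of player `i`. -/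
def DecOf (G : ExtGame n) (i : Fin n) (h : List G.Act) : Prop := G.Dec h ∧ G.owner h = i

/-- `c` is (the label of) an information set of player `i`. -/
def IsInfo (G : ExtGame n) (i : Fin n) (c : G.Lab) : Prop :=
  ∃ h, G.DecOf i h ∧ G.label h = c

/-- A pure strategy of player `i`: an assignment of an available action to each
information set of `i`. -/
def PStrat (G : ExtGame n) (i : Fin n) : Type :=
  {s : G.Lab → G.Act // ∀ h, G.DecOf i h → h ++ [s (G.label h)] ∈ G.H}

instance (G : ExtGame n) (i : Fin n) : Finite (G.PStrat i) := Subtype.finite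

noncomputable instance (G : ExtGame n) (i : Fin n) : Fintype (G.PStrat i) :=
  Fintype.ofFinite _

noncomputable instance (G : ExtGame n) (i : Fin n) : DecidableEq (G.PStrat i) :=
  Classical.decEq _

/-- Opponents' pure-strategy profiles. -/
abbrev OppProf (G : ExtGame n) (i : Fin n) : Type :=
  (j : {j : Fin n // j ≠ i}) → G.PStrat j.val

/-- Combining a strategy for `i` with an opponents' profile. -/
def combine (G : ExtGame n) (i : Fin n) (s : G.PStrat i) (τ : G.OppProf i) :
    (j : Fin n) → G.PStrat j :=
  fun j => if h : j = i then cast (congrArg G.PStrat h.symm) s else τ ⟨j, h⟩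

open Classical in
/-- The play of the game from history `h` under profile `sp`, with fuel `f`. -/
def playFrom (G : ExtGame n) (sp : (j : Fin n) → G.PStrat j) :
    ℕ → List G.Act → List G.Act
  | 0, h => h
  | f + 1, h =>
      if G.Dec h then
        G.playFrom sp f (h ++ [(sp (G.owner h)).val (G.label h)])
      else h

/-- The terminal history reached by the profile `sp`. -/
def outcome (G : ExtGame n) (sp : (j : Fin n) → G.PStrat j) : List G.Act :=
  G.playFrom sp (G.maxLen + 1) []

/-- Player `i`'s utility under the profile `sp`. -/
def U (G : ExtGame n) (i : Fin n) (sp : (j : Fin n) → G.PStrat j) : ℝ :=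
  G.payoff i (G.outcome sp)

/-- The profile `sp` reaches the information set `c` of player `i`. -/
def Reaches (G : ExtGame n) (sp : (j : Fin n) → G.PStrat j) (i : Fin n) (c : G.Lab) :
    Prop :=
  ∃ p, p <+: G.outcome sp ∧ G.DecOf i p ∧ G.label p = c

/-- `Σ'_{σ,I,-i}`: the opponents' profiles in `T` for which `(σ, τ₋ᵢ)` reaches `c`. -/
def ReachSet (G : ExtGame n) (i : Fin n) (σ : G.PStrat i) (c : G.Lab)
    (T : Set (G.OppProf i)) : Set (G.OppProf i) :=
  {τ ∈ T | G.Reaches (G.combine i σ τ) i c}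

/-- `Σ'_{σ,σ',I,-i}` for a mixed strategy `m`. -/
def ReachSetMix (G : ExtGame n) (i : Fin n) (σ : G.PStrat i) (m : G.PStrat i → ℝ)
    (c : G.Lab) (T : Set (G.OppProf i)) : Set (G.OppProf i) :=
  {τ ∈ T | G.Reaches (G.combine i σ τ) i c ∧
    ∀ s, 0 < m s → G.Reaches (G.combine i s τ) i c}

/-- Utility of the mixed strategy `m` of player `i` against the opponents' profile `τ`. -/
def EUmixE (G : ExtGame n) (i : Fin n) (m : G.PStrat i → ℝ) (τ : G.OppProf i) : ℝ :=
  ∑ s : G.PStrat i, m s * G.U i (G.combine i s τ)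

/-- `σ` is conditionally dominated on `Σ'_i × T`. -/
def CondDom (G : ExtGame n) (i : Fin n) (σ : G.PStrat i) (T : Set (G.OppProf i)) :
    Prop :=
  ∃ c, G.IsInfo i c ∧ ∃ m : G.PStrat i → ℝ, IsDist m ∧
    (G.ReachSetMix i σ m c T).Nonempty ∧
    ∀ τ ∈ G.ReachSetMix i σ m c T, G.U i (G.combine i σ τ) < G.EUmixE i m τ

/-- The information set `c'` of player `i` is at or below `c`. -/
def AtOrBelow (G : ExtGame n) (i : Fin n) (c' c : G.Lab) : Prop :=
  ∃ h h', G.DecOf i h ∧ G.DecOf i h' ∧ G.label h' = c ∧ G.label h = c' ∧ h' <+: h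

/-- The information set `c'` of player `i` precedes `c`. -/
def Precedes (G : ExtGame n) (i : Fin n) (c' c : G.Lab) : Prop :=
  ∃ h h', G.DecOf i h ∧ G.DecOf i h' ∧ G.label h = c' ∧ G.label h' = c ∧
    h <+: h' ∧ h ≠ h'

/-- `σ` is conditionally dominated′ on `Σ'_i × T`. -/
def CondDom' (G : ExtGame n) (i : Fin n) (σ : G.PStrat i) (T : Set (G.OppProf i)) :
    Prop :=
  ∃ c, G.IsInfo i c ∧ (G.ReachSet i σ c T).Nonempty ∧
    ∃ m : G.PStrat i → ℝ, IsDist m ∧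
      (∀ s, 0 < m s → ∀ c', G.IsInfo i c' → ¬G.AtOrBelow i c' c →
        s.val c' = σ.val c') ∧
      ∀ τ ∈ G.ReachSet i σ c T, G.U i (G.combine i σ τ) < G.EUmixE i m τ

/-- `σ` is weakly dominated by the mixed strategy `m` with respect to `T`. -/
def WDomE (G : ExtGame n) (i : Fin n) (m : G.PStrat i → ℝ) (σ : G.PStrat i)
    (T : Set (G.OppProf i)) : Prop :=
  (∀ τ ∈ T, G.U i (G.combine i σ τ) ≤ G.EUmixE i m τ) ∧
    ∃ τ ∈ T, G.U i (G.combine i σ τ) < G.EUmixE i m τ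

/-- `σ` is an almost-best response conditional on reaching the information set `c` to the
first measure of `L | E`. -/
def AlmostBestAt (G : ExtGame n) (i : Fin n) (σ : G.PStrat i) (c : G.Lab)
    (L : LPS (G.OppProf i)) (E : Set (G.OppProf i)) : Prop :=
  ∀ σ' : G.PStrat i,
    (∀ c', G.IsInfo i c' → G.Precedes i c' c → σ'.val c' = σ.val c') →
    L.condExp E (fun τ => G.U i (G.combine i σ' τ)) ≤
      L.condExp E (fun τ => G.U i (G.combine i σ τ))

end ExtGame

end

/-!
If `σ` were conditionally dominated at an information set `I` by a mixture `σ'`, then by perfect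
recall every pure strategy in the support of `σ'` reaches `I` whenever `σ` does, so it may be
replaced by the strategy that plays like `σ` except at or below `I` without changing its payoffs on
`Σ'_{σ,I,-i}`. These replacements are admissible in the almost-best-response condition, and
averaging their inequalities under the first level of the LPS that charges `Σ'_{σ,I,-i}`
contradicts the strict domination.

Conversely, the LPS is built level by level. For the set `W` of opponents' profiles not charged
so far, von Neumann's minimax theorem yields either a distribution on `W` against which `σ` is at
least as good as every deviation at or below every information set whose reach set lies in `W`,
or a mixture of such deviations that beats `σ` everywhere on `W`. In the latter case the mixture
dominates `σ` conditionally at a `Precedes`-minimal information set of its support, since the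
deviations involved leave the play up to that set unchanged. The support of the new level is then
removed from `W`.
-/

theorem List.IsPrefix.take_eq_take {α : Type*} {l₁ l₂ : List α} (h : l₁ <+: l₂) {j : ℕ}
    (hj : j ≤ l₁.length) : l₂.take j = l₁.take j := by
  obtain ⟨t, rfl⟩ := h
  exact List.take_append_of_le_length hj

def supportedSimplex {β : Type*} [Fintype β] (W : Set β) : Set (β → ℝ) :=
  stdSimplex ℝ β ∩ {y | ∀ b ∉ W, y b = 0}

namespace supportedSimplex

variable {β : Type*} [Fintype β]

theorem isCompact (W : Set β) : IsCompact (supportedSimplex W) := by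
  refine (isCompact_stdSimplex ℝ β).inter_right ?_
  simp only [Set.ofPred_forall]
  exact isClosed_iInter fun b => isClosed_iInter fun _ =>
    isClosed_eq (continuous_apply b) continuous_const

theorem convex (W : Set β) : Convex ℝ (supportedSimplex W) := by
  refine (convex_stdSimplex ℝ β).inter ?_
  intro x hx y hy a b _ _ _ c hc
  simp [hx c hc, hy c hc]

theorem single_mem [DecidableEq β] {W : Set β} {b : β} (hb : b ∈ W) :
    Pi.single b 1 ∈ supportedSimplex W :=
  ⟨single_mem_stdSimplex ℝ b, fun _ hc => Pi.single_eq_of_ne (ne_of_mem_of_not_mem hb hc).symm _⟩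

end supportedSimplex

/-- Ville's theorem of the alternative. At a saddle point of the bilinear form `x ᵀ g y`, the
sign of the value decides which alternative holds. -/
theorem exists_sum_mul_neg_or_exists_sum_mul_nonneg {α β : Type*} [Fintype α] [Fintype β]
    (g : α → β → ℝ) (P : Set α) {W : Set β} (hW : W.Nonempty) :
    (∃ x ∈ supportedSimplex P, ∀ b ∈ W, ∑ a, x a * g a b < 0) ∨
      ∃ y ∈ supportedSimplex W, ∀ a ∈ P, 0 ≤ ∑ b, y b * g a b := by
  classical
  obtain ⟨b₀, hb₀⟩ := hW
  rcases P.eq_empty_or_nonempty with rfl | ⟨a₀, ha₀⟩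
  · exact Or.inr ⟨_, supportedSimplex.single_mem hb₀, fun a ha => ha.elim⟩
  set B : (α → ℝ) →ₗ[ℝ] (β → ℝ) →ₗ[ℝ] ℝ := Matrix.toLinearMap₂' ℝ (Matrix.of g)
  have hB : ∀ x y, B x y = ∑ a, x a * ∑ b, y b * g a b := fun x y => by
    simp [B, Matrix.toLinearMap₂'_apply', dotProduct, Matrix.mulVec, mul_comm]
  obtain ⟨x, hx, y, hy, hsaddle⟩ := Sion.exists_isSaddlePointOn (f := fun x y => B x y)
    ⟨_, supportedSimplex.single_mem ha₀⟩ (supportedSimplex.convex P)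
    (supportedSimplex.isCompact P)
    (fun y _ => (LinearMap.continuous_of_finiteDimensional (B.flip y)).lowerSemicontinuous
      |>.lowerSemicontinuousOn _)
    (fun y _ => ((B.flip y).convexOn (supportedSimplex.convex P)).quasiconvexOn)
    (supportedSimplex.convex W) ⟨_, supportedSimplex.single_mem hb₀⟩
    (supportedSimplex.isCompact W)
    (fun x _ => (LinearMap.continuous_of_finiteDimensional (B x)).upperSemicontinuous
      |>.upperSemicontinuousOn _)
    (fun x _ => ((B x).concaveOn (supportedSimplex.convex W)).quasiconcaveOn)
  rcases lt_or_ge (B x y) 0 with hneg | hnonneg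
  · refine Or.inl ⟨x, hx, fun b hb => ?_⟩
    have := (hsaddle x hx _ (supportedSimplex.single_mem hb)).trans_lt hneg
    simpa [hB, Pi.single_apply] using this
  · refine Or.inr ⟨y, hy, fun a ha => ?_⟩
    have := hnonneg.trans (hsaddle _ (supportedSimplex.single_mem ha) y hy)
    simpa [hB, Pi.single_apply] using this

section Probability

variable {Ω : Type*} [Fintype Ω]

theorem probOf_singleton_inter (p : Ω → ℝ) (a : Ω) (E : Set Ω) :
    probOf p ({a} ∩ E) = E.indicator p a := by
  classical
  rw [probOf, Finset.sum_eq_single a (fun b _ hb => by simp [hb]) (by simp)]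
  by_cases ha : a ∈ E <;> simp [ha]

theorem probOf_pos_iff {p : Ω → ℝ} (hp : ∀ a, 0 ≤ p a) {E : Set Ω} :
    0 < probOf p E ↔ ∃ a ∈ E, 0 < p a := by
  rw [probOf, Finset.sum_pos_iff_of_nonneg fun a _ => E.indicator_nonneg (fun b _ => hp b) a]
  refine ⟨fun ⟨a, _, ha⟩ => ?_, fun ⟨a, haE, ha⟩ => ⟨a, Finset.mem_univ a, by simpa [haE]⟩⟩
  by_cases haE : a ∈ E
  · exact ⟨a, haE, by simpa [haE] using ha⟩
  · simp [haE] at ha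

theorem IsDist.exists_pos {p : Ω → ℝ} (hp : IsDist p) : ∃ a, 0 < p a :=
  ((Finset.sum_pos_iff_of_nonneg fun a _ => hp.1 a).1 (hp.2 ▸ one_pos)).imp fun _ ⟨_, h⟩ => h

end Probability

namespace LPS

variable {Ω : Type*} [Fintype Ω]

theorem exists_isLeast (L : LPS Ω) {E : Set Ω} (hE : ∃ ℓ, 0 < probOf (L.μ ℓ) E) :
    ∃ K, 0 < probOf (L.μ K) E ∧ ∀ ℓ < K, ¬ 0 < probOf (L.μ ℓ) E := by
  obtain ⟨K, hK, hmin⟩ := wellFounded_lt.has_min {ℓ | 0 < probOf (L.μ ℓ) E} hE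
  exact ⟨K, hK, fun ℓ hℓ hpos => hmin ℓ hpos hℓ⟩

theorem condExp_eq_of_isLeast (L : LPS Ω) {E : Set Ω} {K : Fin (L.m + 1)}
    (hK : 0 < probOf (L.μ K) E) (hmin : ∀ ℓ < K, ¬ 0 < probOf (L.μ ℓ) E) (f : Ω → ℝ) :
    L.condExp E f = (∑ a, E.indicator (L.μ K) a * f a) / probOf (L.μ K) E := by
  have hex : ∃ ℓ : ℕ, ∃ hℓ : ℓ < L.m + 1, 0 < probOf (L.μ ⟨ℓ, hℓ⟩) E := ⟨K, K.2, hK⟩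
  have hfind : (⟨Nat.find hex, (Nat.find_spec hex).choose⟩ : Fin (L.m + 1)) = K :=
    Fin.ext <| (Nat.find_eq_iff hex).2
      ⟨⟨K.2, hK⟩, fun ℓ hℓ ⟨hℓm, hpos⟩ => hmin ⟨ℓ, hℓm⟩ hℓ hpos⟩
  simp only [condExp, condFirst, dif_pos hex, hfind, probOf_singleton_inter, Finset.sum_div,
    div_mul_eq_mul_div]

theorem condExp_congr (L : LPS Ω) {E : Set Ω} {f g : Ω → ℝ} (h : ∀ a ∈ E, f a = g a) :
    L.condExp E f = L.condExp E g := by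
  refine Finset.sum_congr rfl fun a _ => ?_
  by_cases ha : a ∈ E
  · rw [h a ha]
  · simp [condFirst, probOf, ha]

theorem condExp_sub (L : LPS Ω) (E : Set Ω) (f g : Ω → ℝ) :
    L.condExp E (fun a => f a - g a) = L.condExp E f - L.condExp E g := by
  simp only [condExp, mul_sub, Finset.sum_sub_distrib]

theorem condExp_sum_mul {ι : Type*} (L : LPS Ω) (E : Set Ω) (s : Finset ι) (w : ι → ℝ)
    (f : ι → Ω → ℝ) :
    L.condExp E (fun a => ∑ j ∈ s, w j * f j a) = ∑ j ∈ s, w j * L.condExp E (f j) := by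
  simp only [condExp, Finset.mul_sum]
  rw [Finset.sum_comm]
  exact Finset.sum_congr rfl fun j _ => Finset.sum_congr rfl fun a _ => by ring

theorem condExp_lt_condExp (L : LPS Ω) {E : Set Ω} (hE : ∃ ℓ, 0 < probOf (L.μ ℓ) E)
    {f g : Ω → ℝ} (h : ∀ a ∈ E, f a < g a) : L.condExp E f < L.condExp E g := by
  obtain ⟨K, hK, hmin⟩ := L.exists_isLeast hE
  rw [L.condExp_eq_of_isLeast hK hmin, L.condExp_eq_of_isLeast hK hmin]
  refine div_lt_div_of_pos_right (Finset.sum_lt_sum (fun a _ => ?_) ?_) hK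
  · by_cases ha : a ∈ E
    · simpa [ha] using mul_le_mul_of_nonneg_left (h a ha).le ((L.dist K).1 a)
    · simp [ha]
  · obtain ⟨a, ha, hpos⟩ := (probOf_pos_iff (L.dist K).1).1 hK
    exact ⟨a, Finset.mem_univ a, by simpa [ha] using mul_lt_mul_of_pos_left (h a ha) hpos⟩

def single (ν : Ω → ℝ) (hν : IsDist ν) : LPS Ω := ⟨0, fun _ => ν, fun _ => hν⟩

def cons (ν : Ω → ℝ) (hν : IsDist ν) (L : LPS Ω) : LPS Ω :=
  ⟨L.m + 1, Fin.cons ν L.μ, Fin.cases hν L.dist⟩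

theorem condExp_cons_of_pos {ν : Ω → ℝ} (hν : IsDist ν) (L : LPS Ω) {E : Set Ω}
    (hE : 0 < probOf ν E) (f : Ω → ℝ) :
    (cons ν hν L).condExp E f = (∑ a, E.indicator ν a * f a) / probOf ν E :=
  condExp_eq_of_isLeast _ (K := 0) hE (fun ℓ hℓ => absurd hℓ (Fin.not_lt_zero ℓ)) f

theorem condExp_cons_of_not_pos {ν : Ω → ℝ} (hν : IsDist ν) (L : LPS Ω) {E : Set Ω}
    (hνE : ¬ 0 < probOf ν E) (hE : ∃ ℓ, 0 < probOf (L.μ ℓ) E) (f : Ω → ℝ) :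
    (cons ν hν L).condExp E f = L.condExp E f := by
  obtain ⟨K, hK, hmin⟩ := L.exists_isLeast hE
  rw [L.condExp_eq_of_isLeast hK hmin]
  refine condExp_eq_of_isLeast (cons ν hν L) (K := K.succ) hK (fun ℓ hℓ => ?_) f
  induction ℓ using Fin.cases with
  | zero => exact hνE
  | succ ℓ => exact hmin ℓ (Fin.succ_lt_succ_iff.1 hℓ)

theorem exists_of_levels {κ : Type*} (E : κ → Set Ω) (f : κ → Ω → ℝ) (P : Set κ)
    (hlevel : ∀ W : Finset Ω, W.Nonempty → ∃ ν ∈ supportedSimplex (W : Set Ω),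
      ∀ k ∈ P, E k ⊆ W → (E k).Nonempty → 0 ≤ ∑ a, (E k).indicator ν a * f k a)
    (W : Finset Ω) (hW : W.Nonempty) :
    ∃ L : LPS Ω, (∀ ℓ a, 0 < L.μ ℓ a → a ∈ W) ∧ (∀ a ∈ W, ∃ ℓ, 0 < L.μ ℓ a) ∧
      ∀ k ∈ P, E k ⊆ W → (E k).Nonempty → 0 ≤ L.condExp (E k) (f k) := by
  induction W using Finset.strongInduction with
  | H W ih =>
  obtain ⟨ν, ⟨hν, hνW⟩, hνP⟩ := hlevel W hW
  have hsuppν : ∀ a, 0 < ν a → a ∈ W := fun a ha => by_contra fun h => ha.ne' (hνW a h)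
  classical
  set W' := W.filter (fun a => ν a = 0)
  have hW'W : W' ⊂ W :=
    have ⟨a, ha⟩ := IsDist.exists_pos hν
    Finset.filter_ssubset.2 ⟨a, hsuppν a ha, ha.ne'⟩
  have hW' : ∀ a ∈ W, ¬ 0 < ν a → a ∈ W' := fun a ha hpos =>
    Finset.mem_filter.2 ⟨ha, le_antisymm (not_lt.1 hpos) (hν.1 a)⟩
  -- when `W'` is empty the tail is never consulted; `single ν` keeps it supported in `W`
  obtain ⟨L', hL'W, hL'⟩ : ∃ L' : LPS Ω, (∀ ℓ a, 0 < L'.μ ℓ a → a ∈ W) ∧ (W'.Nonempty →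
      (∀ a ∈ W', ∃ ℓ, 0 < L'.μ ℓ a) ∧
      ∀ k ∈ P, E k ⊆ W' → (E k).Nonempty → 0 ≤ L'.condExp (E k) (f k)) := by
    by_cases hne : W'.Nonempty
    · obtain ⟨L', hsupp, hcov, hopt⟩ := ih W' hW'W hne
      exact ⟨L', fun ℓ a ha => Finset.filter_subset _ _ (hsupp ℓ a ha), fun _ => ⟨hcov, hopt⟩⟩
    · exact ⟨single ν hν, fun _ => hsuppν, fun h => absurd h hne⟩
  refine ⟨cons ν hν L', fun ℓ a ha => ?_, fun a ha => ?_, fun k hk hkW ⟨a, ha⟩ => ?_⟩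
  · induction ℓ using Fin.cases with
    | zero => exact hsuppν a ha
    | succ ℓ => exact hL'W ℓ a ha
  · by_cases hpos : 0 < ν a
    · exact ⟨0, hpos⟩
    · obtain ⟨ℓ, hℓ⟩ := (hL' ⟨a, hW' a ha hpos⟩).1 a (hW' a ha hpos)
      exact ⟨ℓ.succ, hℓ⟩
  · by_cases hpos : 0 < probOf ν (E k)
    · rw [condExp_cons_of_pos hν L' hpos]
      exact div_nonneg (hνP k hk hkW ⟨a, ha⟩) hpos.le
    · have hkW' : E k ⊆ W' := fun b hb =>
        hW' b (hkW hb) fun hb' => hpos ((probOf_pos_iff hν.1).2 ⟨b, hb, hb'⟩)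
      obtain ⟨hcov, hopt⟩ := hL' ⟨a, hkW' ha⟩
      obtain ⟨ℓ, hℓ⟩ := hcov a (hkW' ha)
      rw [condExp_cons_of_not_pos hν L' hpos ⟨ℓ, (probOf_pos_iff (L'.dist ℓ).1).2 ⟨a, ha, hℓ⟩⟩]
      exact hopt k hk hkW' ⟨a, ha⟩

end LPS

section Experience

variable {Act Lab ι : Type*} [DecidableEq ι] (owner : List Act → ι) (label : List Act → Lab)
  (i : ι)

theorem mem_experGo_iff {e : Lab × Act} : ∀ pre rest : List Act,
    e ∈ experGo owner label i pre rest ↔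
      ∃ j, ∃ hj : j < rest.length, owner (pre ++ rest.take j) = i ∧
        e = (label (pre ++ rest.take j), rest[j])
  | pre, [] => by simp [experGo]
  | pre, a :: rest => by
    rw [experGo, List.mem_append, mem_experGo_iff (pre ++ [a]) rest]
    constructor
    · rintro (h | ⟨j, hj, ho, rfl⟩)
      · split_ifs at h with ho
        · exact ⟨0, by simp, by simpa using ho, by simpa using h⟩
        · simp at h
      · exact ⟨j + 1, by simpa using hj, by simpa using ho, by simp⟩
    · rintro ⟨_ | j, hj, ho, rfl⟩
      · simp only [List.take_zero, List.append_nil] at ho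
        simp [ho]
      · exact Or.inr ⟨j, by simpa using hj, by simpa using ho, by simp⟩

end Experience

namespace ExtGame

variable {n : ℕ}

def act (G : ExtGame n) (sp : (j : Fin n) → G.PStrat j) (h : List G.Act) : G.Act :=
  (sp (G.owner h)).val (G.label h)

def Follows (G : ExtGame n) (sp : (j : Fin n) → G.PStrat j) (p : List G.Act) : Prop :=
  ∀ j (hj : j < p.length), p[j] = G.act sp (p.take j)

variable {G : ExtGame n} {sp : (j : Fin n) → G.PStrat j}

theorem mem_H_of_prefix {p h : List G.Act} (hp : p <+: h) (hh : h ∈ G.H) : p ∈ G.H := by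
  obtain ⟨t, rfl⟩ := hp
  induction t using List.reverseRecOn with
  | nil => simpa using hh
  | append_singleton t a ih => exact ih (G.prefix_closed _ a (by simpa using hh))

theorem dec_take {p : List G.Act} (hp : p ∈ G.H) {j : ℕ} (hj : j < p.length) :
    G.Dec (p.take j) :=
  ⟨mem_H_of_prefix (List.take_prefix _ _) hp,
    p[j], List.take_concat_get' p j hj ▸ mem_H_of_prefix (List.take_prefix _ _) hp⟩

theorem Follows.of_prefix {p q : List G.Act} (hq : G.Follows sp q) (hpq : p <+: q) :
    G.Follows sp p := fun j hj => by
  rw [hpq.getElem hj, hq j (hj.trans_le hpq.length_le), hpq.take_eq_take hj.le]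

theorem Follows.append_act {p : List G.Act} (hp : G.Follows sp p) :
    G.Follows sp (p ++ [G.act sp p]) := fun j hj => by
  rcases (Nat.lt_succ_iff.1 (by simpa using hj)).lt_or_eq with hj' | rfl
  · rw [List.getElem_append_left hj', List.take_append_of_le_length hj'.le, hp j hj']
  · simp

theorem Follows.prefix_of_length_le {p q : List G.Act} (hp : G.Follows sp p)
    (hq : G.Follows sp q) (hle : p.length ≤ q.length) : p <+: q := by
  have htake : ∀ k ≤ p.length, p.take k = q.take k := by
    intro k hk
    induction k with
    | zero => simp
    | succ k ih =>
      have hkp : k < p.length := hk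
      rw [← List.take_concat_get' p k hkp, ← List.take_concat_get' q k (hkp.trans_le hle),
        hp k hkp, hq k (hkp.trans_le hle), ih hkp.le]
  rw [← List.take_length (l := p), htake p.length le_rfl]
  exact List.take_prefix _ _

theorem follows_playFrom : ∀ (f : ℕ) (h : List G.Act), G.Follows sp h →
    G.Follows sp (G.playFrom sp f h)
  | 0, _, hh => hh
  | f + 1, h, hh => by
    rw [playFrom]
    split_ifs
    exacts [follows_playFrom f _ hh.append_act, hh]

theorem playFrom_mem : ∀ (f : ℕ) (h : List G.Act), h ∈ G.H → G.playFrom sp f h ∈ G.H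
  | 0, _, hh => hh
  | f + 1, h, hh => by
    rw [playFrom]
    split_ifs with hd
    exacts [playFrom_mem f _ ((sp (G.owner h)).2 h ⟨hd, rfl⟩), hh]

theorem not_dec_playFrom : ∀ (f : ℕ) (h : List G.Act), h ∈ G.H →
    G.maxLen < f + h.length → ¬ G.Dec (G.playFrom sp f h)
  | 0, h, hh, hf => absurd (G.len_bound h hh) (by omega)
  | f + 1, h, hh, hf => by
    rw [playFrom]
    split_ifs with hd
    · refine not_dec_playFrom f _ ((sp (G.owner h)).2 h ⟨hd, rfl⟩) ?_
      simp only [List.length_append, List.length_singleton]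
      omega
    · exact hd

theorem outcome_mem (sp : (j : Fin n) → G.PStrat j) : G.outcome sp ∈ G.H :=
  playFrom_mem _ [] G.root_mem

theorem follows_outcome (sp : (j : Fin n) → G.PStrat j) : G.Follows sp (G.outcome sp) :=
  follows_playFrom _ [] fun _ h => absurd h (Nat.not_lt_zero _)

theorem not_dec_outcome (sp : (j : Fin n) → G.PStrat j) : ¬ G.Dec (G.outcome sp) :=
  not_dec_playFrom _ [] G.root_mem (by simp)

theorem prefix_outcome_iff {p : List G.Act} :
    p <+: G.outcome sp ↔ p ∈ G.H ∧ G.Follows sp p := by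
  refine ⟨fun hp => ⟨mem_H_of_prefix hp (outcome_mem sp), (follows_outcome sp).of_prefix hp⟩,
    fun ⟨hH, hF⟩ => ?_⟩
  rcases le_or_gt p.length (G.outcome sp).length with hle | hlt
  · exact hF.prefix_of_length_le (follows_outcome sp) hle
  · have hpre := (follows_outcome sp).prefix_of_length_le hF hlt.le
    have hdec := dec_take hH hlt
    rw [← List.prefix_iff_eq_take.1 hpre] at hdec
    exact absurd hdec (not_dec_outcome sp)

theorem eq_outcome_of_follows {h : List G.Act} (hH : h ∈ G.H) (hF : G.Follows sp h)
    (hd : ¬ G.Dec h) : h = G.outcome sp := by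
  have hpre := prefix_outcome_iff.2 ⟨hH, hF⟩
  by_contra hne
  have hlt : h.length < (G.outcome sp).length :=
    lt_of_le_of_ne hpre.length_le fun hl => hne (hpre.eq_of_length hl)
  exact hd (List.prefix_iff_eq_take.1 hpre ▸ dec_take (outcome_mem sp) hlt)


variable {i : Fin n}

theorem act_combine_of_owner {h : List G.Act} (ho : G.owner h = i) (s : G.PStrat i)
    (τ : G.OppProf i) : G.act (G.combine i s τ) h = s.val (G.label h) := by
  subst ho
  simp [act, combine]

theorem act_combine_of_owner_ne {h : List G.Act} (ho : G.owner h ≠ i) (s s' : G.PStrat i)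
    (τ : G.OppProf i) : G.act (G.combine i s τ) h = G.act (G.combine i s' τ) h := by
  simp [act, combine, ho]

def AgreeAbove (s' s : G.PStrat i) (p : List G.Act) : Prop :=
  ∀ j < p.length, G.owner (p.take j) = i →
    s'.val (G.label (p.take j)) = s.val (G.label (p.take j))

theorem Follows.combine_of_agreeAbove {s s' : G.PStrat i} {τ : G.OppProf i} {p : List G.Act}
    (hp : G.Follows (G.combine i s τ) p) (h : AgreeAbove s' s p) :
    G.Follows (G.combine i s' τ) p := fun j hj => by
  rw [hp j hj]
  by_cases ho : G.owner (p.take j) = i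
  · rw [act_combine_of_owner ho, act_combine_of_owner ho, h j hj ho]
  · exact act_combine_of_owner_ne ho s s' τ

theorem prefix_outcome_of_agreeAbove {s s' : G.PStrat i} {τ : G.OppProf i} {p : List G.Act}
    (hp : p <+: G.outcome (G.combine i s τ)) (h : AgreeAbove s' s p) :
    p <+: G.outcome (G.combine i s' τ) :=
  have ⟨hH, hF⟩ := prefix_outcome_iff.1 hp
  prefix_outcome_iff.2 ⟨hH, hF.combine_of_agreeAbove h⟩

theorem outcome_eq_of_agreeAbove {s s' : G.PStrat i} {τ : G.OppProf i}
    (h : AgreeAbove s' s (G.outcome (G.combine i s τ))) :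
    G.outcome (G.combine i s' τ) = G.outcome (G.combine i s τ) :=
  (eq_outcome_of_follows (outcome_mem _)
    ((follows_outcome _).combine_of_agreeAbove h) (not_dec_outcome _)).symm

theorem snd_eq_of_mem_experGo {s : G.PStrat i} {τ : G.OppProf i} {p : List G.Act}
    (hp : p <+: G.outcome (G.combine i s τ)) {e : G.Lab × G.Act}
    (he : e ∈ experGo G.owner G.label i [] p) : e.2 = s.val e.1 := by
  obtain ⟨j, hj, ho, rfl⟩ := (mem_experGo_iff _ _ _ _ _).1 he
  simp only [List.nil_append] at ho ⊢
  rw [(prefix_outcome_iff.1 hp).2 j hj, act_combine_of_owner ho]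

theorem experGo_eq_of_label_eq {p p' : List G.Act} (hp : G.DecOf i p) (hp' : G.DecOf i p')
    (hl : G.label p = G.label p') :
    experGo G.owner G.label i [] p = experGo G.owner G.label i [] p' :=
  hp.2 ▸ G.perfect_recall p p' hp.1.1 hp'.1.1 hp.1.2 hp'.1.2 hl

theorem mem_experGo_take {p : List G.Act} {j : ℕ} (hj : j < p.length)
    (ho : G.owner (p.take j) = i) :
    (G.label (p.take j), p[j]) ∈ experGo G.owner G.label i [] p :=
  (mem_experGo_iff _ _ _ _ _).2 ⟨j, hj, by simpa using ho, by simp⟩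

theorem agreeAbove_of_label_eq {σ s : G.PStrat i} {τ τ' : G.OppProf i} {p p' : List G.Act}
    (hp : p <+: G.outcome (G.combine i σ τ)) (hdp : G.DecOf i p)
    (hp' : p' <+: G.outcome (G.combine i s τ')) (hdp' : G.DecOf i p')
    (hl : G.label p = G.label p') : AgreeAbove s σ p := fun j hj ho => by
  have hmem := mem_experGo_take hj ho
  have hσ := snd_eq_of_mem_experGo hp hmem
  rw [experGo_eq_of_label_eq hdp hdp' hl] at hmem
  exact (snd_eq_of_mem_experGo hp' hmem).symm.trans hσ

theorem Reaches.of_reaches {σ s : G.PStrat i} {τ τ' : G.OppProf i} {c : G.Lab}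
    (hσ : G.Reaches (G.combine i σ τ) i c) (hs : G.Reaches (G.combine i s τ') i c) :
    G.Reaches (G.combine i s τ) i c :=
  have ⟨p, hp, hdp, hlp⟩ := hσ
  have ⟨_, hp', hdp', hlp'⟩ := hs
  ⟨p, prefix_outcome_of_agreeAbove hp
    (agreeAbove_of_label_eq hp hdp hp' hdp' (hlp.trans hlp'.symm)), hdp, hlp⟩

theorem precedes_irrefl (c : G.Lab) : ¬ G.Precedes i c c := by
  rintro ⟨h, h', hd, hd', hl, hl', hpre, hne⟩
  exact hne (G.no_two_on_path h h' hd.1.1 hd'.1.1 hd.1.2 hd'.1.2 (hl.trans hl'.symm) hpre)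

theorem decOf_take {p : List G.Act} (hp : p ∈ G.H) {j : ℕ} (hj : j < p.length)
    (ho : G.owner (p.take j) = i) : G.DecOf i (p.take j) :=
  ⟨dec_take hp hj, ho⟩

theorem precedes_label_take {p : List G.Act} (hd : G.DecOf i p) {j : ℕ} (hj : j < p.length)
    (ho : G.owner (p.take j) = i) : G.Precedes i (G.label (p.take j)) (G.label p) :=
  ⟨p.take j, p, decOf_take hd.1.1 hj ho, hd, rfl, rfl, List.take_prefix _ _,
    fun he => by
      have hlen := congrArg List.length he
      rw [List.length_take] at hlen
      omega⟩

theorem exists_take_of_precedes {c b : G.Lab} (hcb : G.Precedes i c b) {h : List G.Act}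
    (hd : G.DecOf i h) (hl : G.label h = b) :
    ∃ j < h.length, G.owner (h.take j) = i ∧ G.label (h.take j) = c := by
  obtain ⟨h₁, h₂, hd₁, hd₂, rfl, rfl, hpre, hne⟩ := hcb
  have hlen : h₁.length < h₂.length :=
    lt_of_le_of_ne hpre.length_le fun he => hne (hpre.eq_of_length he)
  have htake : h₂.take h₁.length = h₁ := (List.prefix_iff_eq_take.1 hpre).symm
  have hmem := mem_experGo_take hlen (htake ▸ hd₁.2)
  rw [experGo_eq_of_label_eq hd₂ hd hl.symm] at hmem
  obtain ⟨j, hj, ho, he⟩ := (mem_experGo_iff _ _ _ _ _).1 hmem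
  simp only [List.nil_append, Prod.mk.injEq] at ho he
  exact ⟨j, hj, ho, he.1.symm.trans (congrArg G.label htake)⟩

theorem precedes_trans {c b a : G.Lab} (hcb : G.Precedes i c b) (hba : G.Precedes i b a) :
    G.Precedes i c a := by
  obtain ⟨q, r, hdq, hdr, hlq, hlr, hqr, hne⟩ := hba
  obtain ⟨j, hj, ho, hlab⟩ := exists_take_of_precedes hcb hdq hlq
  refine ⟨q.take j, r, decOf_take hdq.1.1 hj ho, hdr, hlab, hlr,
    (List.take_prefix _ _).trans hqr, fun he => ?_⟩
  have hlen := congrArg List.length he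
  rw [List.length_take] at hlen
  have := hqr.length_le
  omega

theorem wellFounded_precedes : WellFounded (G.Precedes i) :=
  haveI : IsTrans G.Lab (G.Precedes i) := ⟨fun _ _ _ => precedes_trans⟩
  haveI : Std.Irrefl (G.Precedes i) := ⟨precedes_irrefl⟩
  Finite.wellFounded_of_trans_of_irrefl _

theorem AtOrBelow.eq_or_precedes {b c : G.Lab} (h : G.AtOrBelow i b c) :
    b = c ∨ G.Precedes i c b := by
  obtain ⟨h₀, h₁, hd₀, hd₁, rfl, rfl, hpre⟩ := h
  by_cases he : h₁ = h₀
  · exact Or.inl (congrArg G.label he.symm)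
  · exact Or.inr ⟨h₁, h₀, hd₁, hd₀, rfl, rfl, hpre, he⟩

theorem not_atOrBelow_of_precedes {b c : G.Lab} (h : G.Precedes i b c) : ¬ G.AtOrBelow i b c :=
  fun hbc => hbc.eq_or_precedes.elim (fun he => precedes_irrefl c (he ▸ h))
    fun hcb => precedes_irrefl b (precedes_trans h hcb)

variable (G i) in
def deviationsAt (σ : G.PStrat i) (c : G.Lab) : Set (G.PStrat i) :=
  {s | ∀ b, ¬ G.AtOrBelow i b c → s.val b = σ.val b}

open Classical in
variable (G i) in
noncomputable def deviateAt (σ s : G.PStrat i) (c : G.Lab) : G.PStrat i :=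
  ⟨fun b => if G.AtOrBelow i b c then s.val b else σ.val b, fun h hd => by
    dsimp only
    split_ifs
    exacts [s.2 h hd, σ.2 h hd]⟩

theorem deviateAt_of_atOrBelow {σ s : G.PStrat i} {c b : G.Lab} (h : G.AtOrBelow i b c) :
    (G.deviateAt i σ s c).val b = s.val b := if_pos h

theorem deviateAt_of_not_atOrBelow {σ s : G.PStrat i} {c b : G.Lab}
    (h : ¬ G.AtOrBelow i b c) : (G.deviateAt i σ s c).val b = σ.val b := if_neg h

theorem deviateAt_mem_deviationsAt (σ s : G.PStrat i) (c : G.Lab) :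
    G.deviateAt i σ s c ∈ G.deviationsAt i σ c := fun _ => deviateAt_of_not_atOrBelow

theorem agreeAbove_deviateAt {σ s : G.PStrat i} {c : G.Lab} {p : List G.Act}
    (hdp : G.DecOf i p) (hlp : G.label p = c) : AgreeAbove (G.deviateAt i σ s c) σ p :=
  fun _ hj ho => deviateAt_of_not_atOrBelow
    (not_atOrBelow_of_precedes (hlp ▸ precedes_label_take hdp hj ho))

theorem outcome_eq_of_not_reaches {σ s : G.PStrat i} {τ : G.OppProf i} {c : G.Lab}
    (hs : s ∈ G.deviationsAt i σ c) (hnr : ¬ G.Reaches (G.combine i σ τ) i c) :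
    G.outcome (G.combine i s τ) = G.outcome (G.combine i σ τ) := by
  refine outcome_eq_of_agreeAbove fun j hj ho => hs _ fun hb => hnr ?_
  set q := (G.outcome (G.combine i σ τ)).take j
  have hq : q <+: G.outcome (G.combine i σ τ) := List.take_prefix _ _
  have hdq : G.DecOf i q := decOf_take (outcome_mem _) hj ho
  rcases hb.eq_or_precedes with hc | hc
  · exact ⟨q, hq, hdq, hc⟩
  · obtain ⟨k, hk, hok, hlk⟩ := exists_take_of_precedes hc hdq rfl
    exact ⟨q.take k, (List.take_prefix _ _).trans hq, decOf_take hdq.1.1 hk hok, hlk⟩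

theorem outcome_deviateAt {σ s : G.PStrat i} {τ : G.OppProf i} {c : G.Lab}
    (hσ : G.Reaches (G.combine i σ τ) i c) (hs : G.Reaches (G.combine i s τ) i c) :
    G.outcome (G.combine i (G.deviateAt i σ s c) τ) = G.outcome (G.combine i s τ) := by
  obtain ⟨p, hp, hdp, rfl⟩ := hσ
  obtain ⟨p', hp', hdp', hl⟩ := hs
  have hagree := agreeAbove_of_label_eq hp hdp hp' hdp' hl.symm
  have hps := prefix_outcome_of_agreeAbove hp hagree
  refine outcome_eq_of_agreeAbove fun j hj ho => ?_
  set q := (G.outcome (G.combine i s τ)).take j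
  rcases lt_or_ge j p.length with hjp | hjp
  · have hqp : q = p.take j := hps.take_eq_take hjp.le
    rw [hqp] at ho ⊢
    rw [agreeAbove_deviateAt hdp rfl j hjp ho, hagree j hjp ho]
  · exact deviateAt_of_atOrBelow ⟨q, p, decOf_take (outcome_mem _) hj ho, hdp, rfl, rfl,
      List.prefix_take_iff.2 ⟨hps, hjp⟩⟩

theorem Reaches.of_agree_precedes {σ σ' : G.PStrat i} {τ : G.OppProf i} {c : G.Lab}
    (h : G.Reaches (G.combine i σ τ) i c)
    (hσ' : ∀ c', G.IsInfo i c' → G.Precedes i c' c → σ'.val c' = σ.val c') :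
    G.Reaches (G.combine i σ' τ) i c :=
  have ⟨p, hp, hdp, hlp⟩ := h
  ⟨p, prefix_outcome_of_agreeAbove hp fun _ hj ho =>
    hσ' _ ⟨_, decOf_take hdp.1.1 hj ho, rfl⟩ (hlp ▸ precedes_label_take hdp hj ho), hdp, hlp⟩

theorem Reaches.of_mem_deviationsAt {σ s : G.PStrat i} {τ : G.OppProf i} {c c₀ : G.Lab}
    (h : G.Reaches (G.combine i σ τ) i c₀) (hs : s ∈ G.deviationsAt i σ c)
    (hc : ¬ G.Precedes i c c₀) : G.Reaches (G.combine i s τ) i c₀ :=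
  have ⟨p, hp, hdp, hlp⟩ := h
  ⟨p, prefix_outcome_of_agreeAbove hp fun _ hj ho => hs _ fun hb => by
    have hpre := hlp ▸ precedes_label_take hdp hj ho
    rcases hb.eq_or_precedes with he | hcb
    · exact hc (he ▸ hpre)
    · exact hc (precedes_trans hcb hpre), hdp, hlp⟩

theorem U_deviateAt {σ s : G.PStrat i} {τ : G.OppProf i} {c : G.Lab}
    (hσ : G.Reaches (G.combine i σ τ) i c) (hs : G.Reaches (G.combine i s τ) i c) :
    G.U i (G.combine i (G.deviateAt i σ s c) τ) = G.U i (G.combine i s τ) := by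
  rw [U, U, outcome_deviateAt hσ hs]

theorem not_condDom_of_LPS {σ : G.PStrat i} {T : Set (G.OppProf i)} (L : LPS (G.OppProf i))
    (hcov : ∀ τ ∈ T, ∃ ℓ, 0 < L.μ ℓ τ)
    (hbest : ∀ c, G.IsInfo i c →
      G.ReachSet i σ c T = ∅ ∨ G.AlmostBestAt i σ c L (G.ReachSet i σ c T)) :
    ¬ G.CondDom i σ T := by
  rintro ⟨c, hc, m, hm, ⟨τ₀, hτ₀T, hτ₀σ, hτ₀m⟩, hdom⟩
  set E := G.ReachSet i σ c T
  have hreach : ∀ τ ∈ E, ∀ s, 0 < m s → G.Reaches (G.combine i s τ) i c :=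
    fun τ hτ s hs => hτ.2.of_reaches (hτ₀m s hs)
  have hbestE : G.AlmostBestAt i σ c L E :=
    (hbest c hc).resolve_left (Set.nonempty_iff_ne_empty.1 ⟨τ₀, hτ₀T, hτ₀σ⟩)
  have hsupp : ∀ s, 0 < m s → L.condExp E (fun τ => G.U i (G.combine i s τ)) ≤
      L.condExp E (fun τ => G.U i (G.combine i σ τ)) := fun s hs => by
    rw [← L.condExp_congr fun τ hτ => U_deviateAt hτ.2 (hreach τ hτ s hs)]
    exact hbestE _ fun c' _ hc' => deviateAt_of_not_atOrBelow (not_atOrBelow_of_precedes hc')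
  have hmix : L.condExp E (G.EUmixE i m) ≤ L.condExp E (fun τ => G.U i (G.combine i σ τ)) :=
    calc L.condExp E (G.EUmixE i m)
        = ∑ s, m s * L.condExp E (fun τ => G.U i (G.combine i s τ)) :=
          L.condExp_sum_mul E _ m fun s τ => G.U i (G.combine i s τ)
      _ ≤ ∑ s, m s * L.condExp E (fun τ => G.U i (G.combine i σ τ)) :=
          Finset.sum_le_sum fun s _ => (hm.1 s).eq_or_lt.elim (fun h => by simp [← h])
            fun h => mul_le_mul_of_nonneg_left (hsupp s h) h.le
      _ = L.condExp E (fun τ => G.U i (G.combine i σ τ)) := by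
          rw [← Finset.sum_mul, hm.2, one_mul]
  obtain ⟨ℓ, hℓ⟩ := hcov τ₀ hτ₀T
  have hcharged : 0 < probOf (L.μ ℓ) E :=
    (probOf_pos_iff (L.dist ℓ).1).2 ⟨τ₀, ⟨hτ₀T, hτ₀σ⟩, hℓ⟩
  exact hmix.not_gt (L.condExp_lt_condExp ⟨ℓ, hcharged⟩ fun τ hτ =>
    hdom τ ⟨hτ.1, hτ.2, hreach τ hτ⟩)

variable (G i) in
noncomputable def advantage (σ s : G.PStrat i) (τ : G.OppProf i) : ℝ :=
  G.U i (G.combine i σ τ) - G.U i (G.combine i s τ)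

variable (G i) in
def deviationPairs (σ : G.PStrat i) (T W : Set (G.OppProf i)) : Set (G.Lab × G.PStrat i) :=
  {k | G.IsInfo i k.1 ∧ k.2 ∈ G.deviationsAt i σ k.1 ∧ G.ReachSet i σ k.1 T ⊆ W ∧
    (G.ReachSet i σ k.1 T).Nonempty}

theorem U_eq_sub_advantage {σ s : G.PStrat i} {c : G.Lab} {T : Set (G.OppProf i)}
    (hs : s ∈ G.deviationsAt i σ c) {τ : G.OppProf i} (hτ : τ ∈ T) :
    G.U i (G.combine i s τ) =
      G.U i (G.combine i σ τ) - (G.ReachSet i σ c T).indicator (G.advantage i σ s) τ := by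
  by_cases hE : τ ∈ G.ReachSet i σ c T
  · simp [hE, advantage]
  · rw [Set.indicator_of_notMem hE, sub_zero, U, U,
      outcome_eq_of_not_reaches hs fun hr => hE ⟨hτ, hr⟩]

/-- The marginal `m` of the mixture on strategies dominates `σ` at a `Precedes`-minimal
information set `c₀` of its support: the deviations involved are at or below sets that do not
precede `c₀`, so they still reach `c₀`. -/
theorem condDom_of_mixture {σ : G.PStrat i} {T W : Set (G.OppProf i)}
    {x : G.Lab × G.PStrat i → ℝ} (hx : x ∈ supportedSimplex (G.deviationPairs i σ T W))
    (hneg : ∀ τ ∈ W, ∑ k, x k * (G.ReachSet i σ k.1 T).indicator (G.advantage i σ k.2) τ < 0) :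
    G.CondDom i σ T := by
  obtain ⟨⟨hx0, hx1⟩, hxP⟩ := hx
  have hxpos : ∀ k, 0 < x k → k ∈ G.deviationPairs i σ T W :=
    fun k hk => by_contra fun h => hk.ne' (hxP k h)
  obtain ⟨c₀, ⟨s₀, hs₀⟩, hmin⟩ := wellFounded_precedes.has_min {c | ∃ s, 0 < x (c, s)}
    ((IsDist.exists_pos ⟨hx0, hx1⟩).elim fun k hk => ⟨k.1, k.2, hk⟩)
  obtain ⟨hc₀, -, hc₀W, τ₀, hτ₀⟩ := hxpos _ hs₀
  set m : G.PStrat i → ℝ := fun s => ∑ c, x (c, s)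
  have hm : IsDist m := ⟨fun s => Finset.sum_nonneg fun c _ => hx0 (c, s),
    by rw [Finset.sum_comm, ← Fintype.sum_prod_type']; exact hx1⟩
  have hreach : ∀ τ ∈ G.ReachSet i σ c₀ T, ∀ s, 0 < m s →
      G.Reaches (G.combine i s τ) i c₀ := fun τ hτ s hs => by
    obtain ⟨c, -, hc⟩ := (Finset.sum_pos_iff_of_nonneg fun c _ => hx0 (c, s)).1 hs
    exact hτ.2.of_mem_deviationsAt (hxpos _ hc).2.1 (hmin c ⟨s, hc⟩)
  refine ⟨c₀, hc₀, m, hm, ⟨τ₀, hτ₀.1, hτ₀.2, hreach τ₀ hτ₀⟩, fun τ hτ => ?_⟩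
  have hU : ∀ k, x k * G.U i (G.combine i k.2 τ) = x k * G.U i (G.combine i σ τ) -
      x k * (G.ReachSet i σ k.1 T).indicator (G.advantage i σ k.2) τ := fun k => by
    rcases (hx0 k).eq_or_lt with h | h
    · simp [← h]
    · rw [U_eq_sub_advantage (hxpos k h).2.1 hτ.1, mul_sub]
  calc G.U i (G.combine i σ τ)
      < ∑ k, x k * G.U i (G.combine i σ τ) -
          ∑ k, x k * (G.ReachSet i σ k.1 T).indicator (G.advantage i σ k.2) τ := by
        rw [← Finset.sum_mul, hx1, one_mul]
        linarith [hneg τ (hc₀W ⟨hτ.1, hτ.2.1⟩)]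
    _ = ∑ k, x k * G.U i (G.combine i k.2 τ) := by
        rw [← Finset.sum_sub_distrib]
        exact Finset.sum_congr rfl fun k _ => (hU k).symm
    _ = G.EUmixE i m τ := by
        simp only [EUmixE, m, Finset.sum_mul]
        rw [Fintype.sum_prod_type, Finset.sum_comm]

theorem exists_level_of_not_condDom {σ : G.PStrat i} {T : Set (G.OppProf i)}
    (hnd : ¬ G.CondDom i σ T) (W : Finset (G.OppProf i)) (hW : W.Nonempty) :
    ∃ ν ∈ supportedSimplex (W : Set (G.OppProf i)), ∀ c s, G.IsInfo i c →
      s ∈ G.deviationsAt i σ c → G.ReachSet i σ c T ⊆ W → (G.ReachSet i σ c T).Nonempty →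
      0 ≤ ∑ τ, (G.ReachSet i σ c T).indicator ν τ * G.advantage i σ s τ := by
  rcases exists_sum_mul_neg_or_exists_sum_mul_nonneg
      (fun k => (G.ReachSet i σ k.1 T).indicator (G.advantage i σ k.2))
      (G.deviationPairs i σ T W) (W := (W : Set (G.OppProf i))) hW
    with ⟨x, hx, hneg⟩ | ⟨ν, hν, hnonneg⟩
  · exact absurd (condDom_of_mixture hx hneg) hnd
  · refine ⟨ν, hν, fun c s hc hs hsub hne => ?_⟩
    convert hnonneg (c, s) ⟨hc, hs, hsub, hne⟩ using 2 with τ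
    by_cases hτ : τ ∈ G.ReachSet i σ c T <;> simp [hτ]

theorem almostBestAt_of_forall_deviationsAt {σ : G.PStrat i} {c : G.Lab}
    {T : Set (G.OppProf i)} {L : LPS (G.OppProf i)}
    (h : ∀ s ∈ G.deviationsAt i σ c, 0 ≤ L.condExp (G.ReachSet i σ c T) (G.advantage i σ s)) :
    G.AlmostBestAt i σ c L (G.ReachSet i σ c T) := fun σ' hσ' => by
  rw [← L.condExp_congr fun τ hτ => U_deviateAt hτ.2 (hτ.2.of_agree_precedes hσ')]
  have := h _ (deviateAt_mem_deviationsAt σ σ' c)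
  unfold advantage at this
  rwa [L.condExp_sub, sub_nonneg] at this

end ExtGame

theorem not_condDom_iff_full_support_LPS_general {n : ℕ} (G : ExtGame n) (i : Fin n)
    (T : Set (G.OppProf i)) (hT : T.Nonempty) (σ : G.PStrat i) :
    ¬G.CondDom i σ T ↔
      ∃ L : LPS (G.OppProf i),
        (∀ (ℓ : Fin (L.m + 1)) (τ : G.OppProf i), 0 < L.μ ℓ τ → τ ∈ T) ∧
        (∀ τ ∈ T, ∃ ℓ, 0 < L.μ ℓ τ) ∧
        ∀ c, G.IsInfo i c →
          G.ReachSet i σ c T = ∅ ∨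
          G.AlmostBestAt i σ c L (G.ReachSet i σ c T) := by
  classical
  refine ⟨fun hnd => ?_, fun ⟨L, _, hcov, hbest⟩ => ExtGame.not_condDom_of_LPS L hcov hbest⟩
  obtain ⟨L, hsupp, hcov, hbest⟩ := LPS.exists_of_levels
    (fun k : G.Lab × G.PStrat i => G.ReachSet i σ k.1 T) (fun k => G.advantage i σ k.2)
    {k | G.IsInfo i k.1 ∧ k.2 ∈ G.deviationsAt i σ k.1}
    (fun W hW => (ExtGame.exists_level_of_not_condDom hnd W hW).imp
      fun _ ⟨hν, hlevel⟩ => ⟨hν, fun k hk => hlevel k.1 k.2 hk.1 hk.2⟩)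
    T.toFinset (Set.toFinset_nonempty.2 hT)
  refine ⟨L, fun ℓ τ h => Set.mem_toFinset.1 (hsupp ℓ τ h),
    fun τ hτ => hcov τ (Set.mem_toFinset.2 hτ), fun c hc => ?_⟩
  exact (G.ReachSet i σ c T).eq_empty_or_nonempty.imp id fun hne =>
    ExtGame.almostBestAt_of_forall_deviationsAt fun s hs =>
      hbest (c, s) ⟨hc, hs⟩ (fun τ hτ => Set.mem_toFinset.2 hτ.1) hne

/-- `σ` is not conditionally dominated on `Σ'` iff there is an LPS on
`Σ'_{-i}` with full support such that, conditional on reaching each reachable information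
set `I` of `i`, `σ` is an almost-best response to the conditional LPS. -/
theorem not_condDom_iff_full_support_LPS {n : ℕ} (G : ExtGame n) (i : Fin n)
    (Ti : Set (G.PStrat i)) (T : Set (G.OppProf i)) (hT : T.Nonempty) (σ : G.PStrat i)
    (hσ : σ ∈ Ti) :
    ¬G.CondDom i σ T ↔
      ∃ L : LPS (G.OppProf i),
        (∀ (ℓ : Fin (L.m + 1)) (τ : G.OppProf i), 0 < L.μ ℓ τ → τ ∈ T) ∧
        (∀ τ ∈ T, ∃ ℓ, 0 < L.μ ℓ τ) ∧
        ∀ c, G.IsInfo i c →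
          G.ReachSet i σ c T = ∅ ∨
          G.AlmostBestAt i σ c L (G.ReachSet i σ c T) :=
  not_condDom_iff_full_support_LPS_general G i T hT σ
end

section
/- Suppose that for each player i = 1, …, n the formula φ_i ∈ L²_{i+} is satisfiable in an L²-measurable probability structure appropriate for Γ. Then the conjunction φ_1 ∧ ⋯ ∧ φ_n is satisfiable in an L²-measurable probability structure appropriate for Γ. -/
open scoped BigOperators

noncomputable section

/-- A finite normal-form game with `n` players, all utilities in `[0,1]`. -/
structure Game (n : ℕ) where
  S : Fin n → Type
  fintypeS : ∀ i, Fintype (S i)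
  decEqS : ∀ i, DecidableEq (S i)
  nonemptyS : ∀ i, Nonempty (S i)
  u : (i : Fin n) → ((j : Fin n) → S j) → ℝ
  u_mem : ∀ i σ, u i σ ∈ Set.Icc (0 : ℝ) 1

attribute [instance] Game.fintypeS Game.decEqS Game.nonemptyS

namespace Game

variable {n : ℕ}

abbrev Prof (G : Game n) : Type := (j : Fin n) → G.S j

abbrev OppProf (G : Game n) (i : Fin n) : Type := (j : {j : Fin n // j ≠ i}) → G.S j.val

def stratOpp (G : Game n) (i : Fin n) (σ : G.Prof) : G.OppProf i := fun j => σ j.val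

def combine (G : Game n) (i : Fin n) (s : G.S i) (τ : G.OppProf i) : G.Prof :=
  fun j => if h : j = i then cast (congrArg G.S h.symm) s else τ ⟨j, h⟩

/-- Expected utility of strategy `s` of player `i` under belief `b` on opponents' profiles. -/
def EU (G : Game n) (i : Fin n) (s : G.S i) (b : G.OppProf i → ℝ) : ℝ :=
  ∑ τ : G.OppProf i, b τ * G.u i (G.combine i s τ)

/-- `s` is a best response to the belief `b`. -/
def BR (G : Game n) (i : Fin n) (s : G.S i) (b : G.OppProf i → ℝ) : Prop :=
  ∀ s' : G.S i, G.EU i s' b ≤ G.EU i s b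

/-- Utility of mixed strategy `m` of player `i` against opponents' profile `τ`. -/
def EUmix (G : Game n) (i : Fin n) (m : G.S i → ℝ) (τ : G.OppProf i) : ℝ :=
  ∑ s : G.S i, m s * G.u i (G.combine i s τ)

/-- `s` is weakly dominated by the mixed strategy `m` with respect to `T`. -/
def WDom (G : Game n) (i : Fin n) (m : G.S i → ℝ) (s : G.S i)
    (T : Set (G.OppProf i)) : Prop :=
  (∀ τ ∈ T, G.u i (G.combine i s τ) ≤ G.EUmix i m τ) ∧
    ∃ τ ∈ T, G.u i (G.combine i s τ) < G.EUmix i m τ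

/-- `s` is strongly dominated by the mixed strategy `m` with respect to `T`. -/
def SDom (G : Game n) (i : Fin n) (m : G.S i → ℝ) (s : G.S i)
    (T : Set (G.OppProf i)) : Prop :=
  ∀ τ ∈ T, G.u i (G.combine i s τ) < G.EUmix i m τ

/-- Strategies of player `i` surviving `k` rounds of iterated deletion of weakly
dominated strategies. -/
def NWD (G : Game n) : ℕ → (i : Fin n) → Set (G.S i)
  | 0 => fun _ => Set.univ
  | k + 1 => fun i =>
      {s | s ∈ NWD G k i ∧
        ¬∃ m : G.S i → ℝ, IsDist m ∧
          G.WDom i m s {τ : G.OppProf i | ∀ j, τ j ∈ NWD G k j.val}}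

/-- Strategies of player `i` surviving `k` rounds of iterated deletion of strongly
dominated strategies. -/
def NSD (G : Game n) : ℕ → (i : Fin n) → Set (G.S i)
  | 0 => fun _ => Set.univ
  | k + 1 => fun i =>
      {s | s ∈ NSD G k i ∧
        ¬∃ m : G.S i → ℝ, IsDist m ∧
          G.SDom i m s {τ : G.OppProf i | ∀ j, τ j ∈ NSD G k j.val}}

end Game

open MeasureTheory in
/-- A probability structure appropriate for the game `G`. -/
structure PStruct {n : ℕ} (G : Game n) where
  Ω : Type
  meas : MeasurableSpace Ω
  strat : Ω → G.Prof
  PR : Fin n → Ω → @Measure Ω meas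
  PR_prob : ∀ i ω, @IsProbabilityMeasure Ω meas (PR i ω)
  strat_meas : ∀ (j : Fin n) (s : G.S j), MeasurableSet[meas] {ω | strat ω j = s}
  PR_own_strat : ∀ i ω, PR i ω {ω' | strat ω' i = strat ω i} = 1
  PR_meas : ∀ (i : Fin n) (π : @Measure Ω meas), MeasurableSet[meas] {ω | PR i ω = π}
  PR_own_PR : ∀ i ω, PR i ω {ω' | PR i ω' = PR i ω} = 1

namespace PStruct

variable {n : ℕ} {G : Game n}

/-- The belief on opponents' strategy profiles induced by `PR i ω`. -/
def belief (M : PStruct G) (i : Fin n) (ω : M.Ω) : G.OppProf i → ℝ :=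
  fun τ => (M.PR i ω {ω' | G.stratOpp i (M.strat ω') = τ}).toReal

/-- `(M,ω) ⊨ RAT_i`. -/
def RATi (M : PStruct G) (i : Fin n) (ω : M.Ω) : Prop :=
  G.BR i (M.strat ω i) (M.belief i ω)

/-- `(M,ω) ⊨ B_i E`. -/
def Bel (M : PStruct G) (i : Fin n) (ω : M.Ω) (E : Set M.Ω) : Prop :=
  ∃ F, @MeasurableSet M.Ω M.meas F ∧ F ⊆ E ∧ M.PR i ω F = 1

/-- `(M,ω) ⊨ ⟨B_i⟩ E`. -/
def BelPos (M : PStruct G) (i : Fin n) (ω : M.Ω) (E : Set M.Ω) : Prop :=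
  ∃ F, @MeasurableSet M.Ω M.meas F ∧ F ⊆ E ∧ 0 < M.PR i ω F

end PStruct

/-- The events `RATzero^k_i(M)`, defined simultaneously for all appropriate structures. -/
def RATzero {n : ℕ} (G : Game n) : (k : ℕ) → (M : PStruct G) → Fin n → Set M.Ω
  | 0, _, _ => Set.univ
  | k + 1, M, i =>
      {ω | M.RATi i ω ∧
        M.Bel i ω {ω' | ∃ M' : PStruct G, ∃ ω'' : M'.Ω,
          M'.strat ω'' i = M.strat ω' i ∧ ω'' ∈ RATzero G k M' i} ∧
        M.Bel i ω {ω' | ∀ j, j ≠ i → ω' ∈ RATzero G k M j} ∧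
        ∀ j, j ≠ i → ∀ s : G.S j,
          (∃ M' : PStruct G, ∃ ω' : M'.Ω, M'.strat ω' j = s ∧
              ∀ j', j' ≠ i → ω' ∈ RATzero G k M' j') →
            M.BelPos i ω {ω'' | M.strat ω'' j = s}}

/-- The events `RAT^k_i(M)`. -/
def RATk {n : ℕ} (G : Game n) (M : PStruct G) : (k : ℕ) → Fin n → Set M.Ω
  | 0, _ => Set.univ
  | k + 1, i => {ω | M.RATi i ω ∧ M.Bel i ω {ω' | ∀ j, j ≠ i → ω' ∈ RATk G M k j}}

/-- The event that every player is rational. -/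
def RATall {n : ℕ} {G : Game n} (M : PStruct G) : Set M.Ω := {ω | ∀ j, M.RATi j ω}

/-- The "everyone believes" operator iterated `k` times. -/
def Ek {n : ℕ} {G : Game n} (M : PStruct G) : ℕ → Set M.Ω → Set M.Ω
  | 0, X => X
  | k + 1, X => {ω | ∀ j, M.Bel j ω (Ek M k X)}

/-- `σ` is a rationalizable strategy for player `i`. -/
def Rationalizable {n : ℕ} (G : Game n) (i : Fin n) (σ : G.S i) : Prop :=
  ∃ Z : (j : Fin n) → Set (G.S j),
    σ ∈ Z i ∧
    ∀ j, ∀ σ' ∈ Z j, ∃ μ : G.OppProf j → ℝ, IsDist μ ∧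
      (∀ τ, 0 < μ τ → ∀ j', τ j' ∈ Z j'.val) ∧ G.BR j σ' μ

/-- `σ` is rationalizable′ for player `i`. -/
def Rationalizable' {n : ℕ} (G : Game n) (i : Fin n) (σ : G.S i) : Prop :=
  ∃ X : ℕ → (j : Fin n) → Set (G.S j),
    (∀ j, X 0 j = Set.univ) ∧
    (∀ (k : ℕ) (j : Fin n), ∀ σ' ∈ X (k + 1) j, ∃ μ : G.OppProf j → ℝ, IsDist μ ∧
      (∀ τ, 0 < μ τ → ∀ j', τ j' ∈ X k j'.val) ∧ G.BR j σ' μ) ∧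
    ∀ k, σ ∈ X k i

end
noncomputable section

/-- The language `L²`: formulas built from `true`, `RAT_j`, `play_j(σ_j)` by negation,
conjunction, and the operators `pr_j(φ) ≥ α`, `pr_j(φ) > α` for rational `α ∈ [0,1]`. -/
inductive L2 {n : ℕ} (G : Game n) : Type where
  | tru : L2 G
  | rat : Fin n → L2 G
  | play : (j : Fin n) → G.S j → L2 G
  | neg : L2 G → L2 G
  | conj : L2 G → L2 G → L2 G
  | prGe : Fin n → L2 G → (α : ℚ) → 0 ≤ α → α ≤ 1 → L2 G
  | prGt : Fin n → L2 G → (α : ℚ) → 0 ≤ α → α ≤ 1 → L2 G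

/-- The set of states of `M` at which an `L²` formula holds. -/
def Sat {n : ℕ} {G : Game n} (M : PStruct G) : L2 G → Set M.Ω
  | .tru => Set.univ
  | .rat j => {ω | M.RATi j ω}
  | .play j s => {ω | M.strat ω j = s}
  | .neg φ => (Sat M φ)ᶜ
  | .conj φ ψ => Sat M φ ∩ Sat M ψ
  | .prGe j φ α _ _ => {ω | ENNReal.ofReal (α : ℝ) ≤ M.PR j ω (Sat M φ)}
  | .prGt j φ α _ _ => {ω | ENNReal.ofReal (α : ℝ) < M.PR j ω (Sat M φ)}

/-- `M` is `L²`-measurable: every `L²`-definable event is measurable. -/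
def L2Meas {n : ℕ} {G : Game n} (M : PStruct G) : Prop :=
  ∀ φ : L2 G, @MeasurableSet M.Ω M.meas (Sat M φ)

/-- Membership in `L²_{j+}`. -/
def InL2jp {n : ℕ} {G : Game n} (j : Fin n) : L2 G → Prop
  | .tru => True
  | .rat j' => j' = j
  | .play j' _ => j' = j
  | .prGe j' _ _ _ _ => j' = j
  | .prGt j' _ _ _ _ => j' = j
  | _ => False

/-- The events `RAT3^k_i(M)`, defined simultaneously for all (`L²`-measurable)
appropriate structures. -/
def RAT3 {n : ℕ} (G : Game n) : (k : ℕ) → (M : PStruct G) → Fin n → Set M.Ω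
  | 0, _, _ => Set.univ
  | k + 1, M, i =>
      {ω | M.RATi i ω ∧
        M.Bel i ω {ω' | ∃ M' : PStruct G, L2Meas M' ∧ ∃ ω'' : M'.Ω,
          M'.strat ω'' i = M.strat ω' i ∧ ω'' ∈ RAT3 G k M' i} ∧
        M.Bel i ω {ω' | ∀ j, j ≠ i → ω' ∈ RAT3 G k M j} ∧
        ∀ ψ : L2 G, (∃ j, j ≠ i ∧ InL2jp j ψ) →
          (∃ M' : PStruct G, L2Meas M' ∧ ∃ ω' : M'.Ω,
              ω' ∈ Sat M' ψ ∧ ∀ j, j ≠ i → ω' ∈ RAT3 G k M' j) →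
            M.BelPos i ω (Sat M ψ)}

end

/-! Take the disjoint union of structures `M i` witnessing the `φ i` and add one state
`⋆ = .inr ()` at which player `j` has the strategy and beliefs of the witness state `w j` of
`M j`. Beliefs at a state of `M i` are pushed forward along the (measurable) embedding, so
every `L²` formula keeps its truth value on each `M i`. An `L²_{j+}` formula only speaks
about player `j`'s strategy and beliefs, so `φ j` holds at `⋆` for every `j`. -/

open MeasureTheory Set

theorem MeasurableEmbedding.inl {α β : Type*} [MeasurableSpace α] [MeasurableSpace β] :
    MeasurableEmbedding (Sum.inl : α → α ⊕ β) :=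
  ⟨Sum.inl_injective, measurable_inl, fun _ hs => hs.inl_image⟩

theorem measurableSet_sigma_iff {α : Type*} {β : α → Type*} [∀ a, MeasurableSpace (β a)]
    {s : Set (Sigma β)} : MeasurableSet s ↔ ∀ a, MeasurableSet (Sigma.mk a ⁻¹' s) :=
  MeasurableSpace.measurableSet_iInf

theorem MeasurableEmbedding.sigmaMk {α : Type*} {β : α → Type*} [∀ a, MeasurableSpace (β a)]
    (a : α) : MeasurableEmbedding (Sigma.mk a : β a → Sigma β) where
  injective := sigma_mk_injective
  measurable := Measurable.of_le_map (iInf_le _ a)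
  measurableSet_image' s hs := by
    refine measurableSet_sigma_iff.2 fun b => ?_
    obtain rfl | hba := eq_or_ne b a
    · rwa [sigma_mk_injective.preimage_image]
    · convert MeasurableSet.empty
      refine eq_empty_of_forall_notMem fun x ⟨y, _, hy⟩ => hba ?_
      exact (congrArg Sigma.fst hy).symm

namespace PStruct

variable {n : ℕ} {G : Game n}

attribute [local instance] PStruct.meas

theorem belief_eq_of_PR_eq {M : PStruct G} {i : Fin n} {ω ω' : M.Ω}
    (h : M.PR i ω = M.PR i ω') : M.belief i ω = M.belief i ω' := by
  unfold belief
  rw [h]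

theorem mem_sat_iff_of_agree {M : PStruct G} {i : Fin n} {ω ω' : M.Ω}
    (hstrat : M.strat ω i = M.strat ω' i) (hPR : M.PR i ω = M.PR i ω') {ψ : L2 G}
    (hψ : InL2jp i ψ) : ω ∈ Sat M ψ ↔ ω' ∈ Sat M ψ := by
  cases ψ with
  | tru => exact Iff.rfl
  | rat j | play j s | prGe j ψ α | prGt j ψ α =>
    obtain rfl : j = i := hψ
    simp [Sat, RATi, hstrat, hPR, belief_eq_of_PR_eq hPR]
  | neg | conj => exact hψ.elim

theorem belief_comp {M N : PStruct G} {f : M.Ω → N.Ω} (hf : MeasurableEmbedding f)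
    (hstrat : ∀ x, N.strat (f x) = M.strat x) (hPR : ∀ j x, N.PR j (f x) = (M.PR j x).map f)
    (j : Fin n) (x : M.Ω) : N.belief j (f x) = M.belief j x := by
  funext τ
  simp only [belief, hPR, hf.map_apply, preimage_ofPred_eq, hstrat]

theorem preimage_sat {M N : PStruct G} {f : M.Ω → N.Ω} (hf : MeasurableEmbedding f)
    (hstrat : ∀ x, N.strat (f x) = M.strat x) (hPR : ∀ j x, N.PR j (f x) = (M.PR j x).map f)
    (ψ : L2 G) : f ⁻¹' Sat N ψ = Sat M ψ := by
  induction ψ with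
  | tru | play => ext; simp [Sat, hstrat]
  | rat j => ext; simp [Sat, RATi, hstrat, belief_comp hf hstrat hPR]
  | neg ψ ih => rw [Sat, preimage_compl, ih, Sat]
  | conj ψ ψ' ih ih' => rw [Sat, preimage_inter, ih, ih', Sat]
  | prGe j ψ α _ _ ih | prGt j ψ α _ _ ih => ext; simp [Sat, hPR, hf.map_apply, ih]

section Glue

variable (M : Fin n → PStruct G) (w : ∀ i, (M i).Ω)

abbrev GlueΩ : Type := (Σ k, (M k).Ω) ⊕ Unit

def glueι (k : Fin n) (x : (M k).Ω) : GlueΩ M := .inl ⟨k, x⟩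

theorem measurableEmbedding_glueι (k : Fin n) : MeasurableEmbedding (glueι M k) :=
  MeasurableEmbedding.inl.comp (MeasurableEmbedding.sigmaMk k)

theorem measurableSet_glueΩ_iff {S : Set (GlueΩ M)} :
    MeasurableSet S ↔ ∀ k, MeasurableSet (glueι M k ⁻¹' S) := by
  rw [measurableSet_sum_iff, measurableSet_sigma_iff]
  exact and_iff_left MeasurableSet.of_discrete

def anchor (j : Fin n) : GlueΩ M → Σ k, (M k).Ω
  | .inl p => p
  | .inr _ => ⟨j, w j⟩

def glueStrat (ω : GlueΩ M) : G.Prof :=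
  fun j => (M (anchor M w j ω).1).strat (anchor M w j ω).2 j

noncomputable def gluePR (j : Fin n) (ω : GlueΩ M) : Measure (GlueΩ M) :=
  ((M (anchor M w j ω).1).PR j (anchor M w j ω).2).map (glueι M _)

theorem gluePR_glueι (j k : Fin n) (x : (M k).Ω) :
    gluePR M w j (glueι M k x) = ((M k).PR j x).map (glueι M k) :=
  rfl

theorem exists_anchor (j : Fin n) (ω : GlueΩ M) : ∃ k, ∃ x : (M k).Ω,
    glueStrat M w ω j = (M k).strat x j ∧ gluePR M w j ω = ((M k).PR j x).map (glueι M k) :=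
  ⟨_, _, rfl, rfl⟩

noncomputable def glue : PStruct G where
  Ω := GlueΩ M
  meas := inferInstance
  strat := glueStrat M w
  PR := gluePR M w
  PR_prob j ω := by
    obtain ⟨k, x, -, hPR⟩ := exists_anchor M w j ω
    have := (M k).PR_prob j x
    exact hPR ▸
      Measure.isProbabilityMeasure_map (measurableEmbedding_glueι M k).measurable.aemeasurable
  strat_meas j s := (measurableSet_glueΩ_iff M).2 fun k => (M k).strat_meas j s
  PR_own_strat i ω := by
    obtain ⟨k, x, hstrat, hPR⟩ := exists_anchor M w i ω
    rw [hPR, hstrat, (measurableEmbedding_glueι M k).map_apply]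
    exact (M k).PR_own_strat i x
  PR_meas i π := by
    refine (measurableSet_glueΩ_iff M).2 fun k => ?_
    by_cases hπ : π ∈ range (Measure.map (glueι M k))
    · obtain ⟨μ, rfl⟩ := hπ
      simp only [preimage_ofPred_eq, gluePR_glueι,
        (measurableEmbedding_glueι M k).map_injective.eq_iff]
      exact (M k).PR_meas i μ
    · convert MeasurableSet.empty
      exact eq_empty_of_forall_notMem fun x hx => hπ ⟨_, hx⟩
  PR_own_PR i ω := by
    obtain ⟨k, x, -, hPR⟩ := exists_anchor M w i ω
    rw [hPR, (measurableEmbedding_glueι M k).map_apply]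
    simp only [preimage_ofPred_eq, gluePR_glueι,
      (measurableEmbedding_glueι M k).map_injective.eq_iff]
    exact (M k).PR_own_PR i x

theorem preimage_sat_glue (k : Fin n) (ψ : L2 G) :
    glueι M k ⁻¹' Sat (glue M w) ψ = Sat (M k) ψ :=
  preimage_sat (N := glue M w) (measurableEmbedding_glueι M k) (fun _ => rfl) (fun _ _ => rfl) ψ

theorem L2Meas_glue (hM : ∀ k, L2Meas (M k)) : L2Meas (glue M w) := fun ψ =>
  (measurableSet_glueΩ_iff M).2 fun k => preimage_sat_glue M w k ψ ▸ hM k ψ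

theorem sat_glue_inr {i : Fin n} {ψ : L2 G} (hψ : InL2jp i ψ) (hw : w i ∈ Sat (M i) ψ) :
    (.inr () : (glue M w).Ω) ∈ Sat (glue M w) ψ := by
  have hι : w i ∈ glueι M i ⁻¹' Sat (glue M w) ψ := by rwa [preimage_sat_glue]
  exact (mem_sat_iff_of_agree (M := glue M w) (ω := .inr ()) (ω' := glueι M i (w i))
    rfl rfl hψ).2 hι

end Glue

end PStruct

/-- if for each player `i` the formula `φ i ∈ L²_{i+}` is satisfiable in an
`L²`-measurable appropriate structure, then so is the conjunction `φ 1 ∧ ⋯ ∧ φ n`. -/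
theorem L2_joint_satisfiability {n : ℕ} (G : Game n) (φ : (i : Fin n) → L2 G)
    (hin : ∀ i, InL2jp i (φ i))
    (hsat : ∀ i, ∃ M : PStruct G, L2Meas M ∧ ∃ ω : M.Ω, ω ∈ Sat M (φ i)) :
    ∃ M : PStruct G, L2Meas M ∧ ∃ ω : M.Ω, ∀ i, ω ∈ Sat M (φ i) := by
  choose M hM w hw using hsat
  exact ⟨PStruct.glue M w, PStruct.L2Meas_glue M w hM, .inr (),
    fun i => PStruct.sat_glue_inr M w (hin i) (hw i)⟩
end
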